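/- arXiv:2405.11700 — 2 statements merged into one kernel-verified Lean document; each statement's English description precedes it below -/
import Mathlib

section
/- Let c : (0,1) → ℝ be continuous with c(x) ≤ π² for all x and c not identically equal to π². Then the first eigenvalue of the operator −(u'' + c·u) with Dirichlet conditions on (0,1) is strictly positive, i.e., inf { ∫₀¹ (u')² − ∫₀¹ c u² : u ∈ H¹₀(0,1), ∫₀¹ u² = 1 } > 0. -/
/-!
Pick a point where `c < π²`; by continuity `c ≤ π² - δ` on some `[α, β] ⊂ (0, 1)`, so the
Rayleigh quotient of `u` is at least `(∫ u'² - π²) + δ ∫_α^β u²`, whose first term is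
nonnegative by Wirtinger's inequality `∫ u'² ≥ π² ∫ u²`. On `[a, b]` and for `k (b - a) < π`,
`g = k cot (k (x - a) + θ)` with `θ = (π - k (b - a)) / 2` has no pole and solves the Riccati
equation `g' = -(k² + g²)`, which turns `∫ u'² - k² ∫ u²` into `∫ (u' - g u)² ≥ 0`; letting
`k → π / (b - a)` gives Wirtinger.
If `∫_α^β u²` is small, `u` is small at some `x₁ ∈ [α, β]`. Cutting `[0, 1]` at `x₁` leaves two
intervals of length at most `λ = max β (1 - α) < 1`; on each, `u` minus its linear interpolant
vanishes at the ends, so Wirtinger with the larger constant `(π / λ)²` applies up to an error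
controlled by `u x₁²`, and `∫ u'²` exceeds `π²` by a fixed amount. Either way the quotient is
bounded below by a positive constant independent of `u`.
-/

open MeasureTheory

/-- Rayleigh-type spectrum set for the operator -(u'' + c·u) on (0,a) with
Dirichlet boundary conditions: values of ∫ (u')² − ∫ c u² over normalized
admissible functions. -/
noncomputable def rayleighSet1D (a : ℝ) (c : ℝ → ℝ) : Set ℝ :=
  {r : ℝ | ∃ u : ℝ → ℝ, ContDiff ℝ 1 u ∧ u 0 = 0 ∧ u a = 0 ∧
    (∫ x in (0:ℝ)..a, (u x)^2) = 1 ∧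
    r = (∫ x in (0:ℝ)..a, (deriv u x)^2) - ∫ x in (0:ℝ)..a, c x * (u x)^2}

open Real Set Filter Topology

theorem integral_mul_sq_le_integral_deriv_sq_of_riccati {a b : ℝ} (hab : a ≤ b) {q g : ℝ → ℝ}
    (hq : ContinuousOn q (Icc a b)) (hg : ContinuousOn g (Icc a b))
    (hg' : ∀ x ∈ Ioo a b, HasDerivAt g (-(q x + g x ^ 2)) x)
    {u : ℝ → ℝ} (hu : ContDiff ℝ 1 u) (ha : u a = 0) (hb : u b = 0) :
    ∫ x in a..b, q x * u x ^ 2 ≤ ∫ x in a..b, deriv u x ^ 2 := by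
  have hu' : ∀ x, HasDerivAt u (deriv u x) x := fun x =>
    ((hu.differentiable one_ne_zero) x).hasDerivAt
  have hu'c : Continuous (deriv u) := hu.continuous_deriv le_rfl
  have hqu : ContinuousOn (fun x => q x * u x ^ 2) (Icc a b) :=
    hq.mul (hu.continuous.pow 2).continuousOn
  have key := intervalIntegral.sub_le_integral_of_hasDeriv_right_of_le hab
    (g := fun x => u x ^ 2 * g x) (φ := fun x => deriv u x ^ 2 - q x * u x ^ 2)
    (g' := fun x => 2 * u x * deriv u x * g x - u x ^ 2 * (q x + g x ^ 2))
    ((hu.continuous.pow 2).continuousOn.mul hg)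
    (fun x hx => ((((hu' x).pow 2).mul (hg' x hx)).congr_deriv
      (by simp only [Pi.pow_apply]; ring)).hasDerivWithinAt)
    ((hu'c.pow 2).continuousOn.integrableOn_Icc.sub hqu.integrableOn_Icc)
    (fun x _ => by nlinarith [sq_nonneg (deriv u x - u x * g x)])
  rw [intervalIntegral.integral_sub (f := fun x => deriv u x ^ 2)
    ((hu'c.pow 2).intervalIntegrable a b) (hqu.intervalIntegrable_of_Icc hab)] at key
  simp only [ha, hb] at key
  linarith

theorem sq_mul_integral_sq_le_integral_deriv_sq_of_mul_lt_pi {a b k : ℝ} (hab : a ≤ b)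
    (hk : 0 ≤ k) (hkπ : k * (b - a) < π) {u : ℝ → ℝ} (hu : ContDiff ℝ 1 u) (ha : u a = 0)
    (hb : u b = 0) :
    k ^ 2 * ∫ x in a..b, u x ^ 2 ≤ ∫ x in a..b, deriv u x ^ 2 := by
  obtain ⟨θ, hθ⟩ : ∃ θ, θ = (π - k * (b - a)) / 2 := ⟨_, rfl⟩
  have hsin : ∀ x ∈ Icc a b, 0 < sin (k * (x - a) + θ) := fun x hx => by
    have : k * (x - a) ≤ k * (b - a) := mul_le_mul_of_nonneg_left (by linarith [hx.2]) hk
    apply sin_pos_of_pos_of_lt_pi <;> nlinarith [hx.1]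
  have hcont : ContinuousOn (fun x => k * cos (k * (x - a) + θ) / sin (k * (x - a) + θ))
      (Icc a b) :=
    ContinuousOn.div (by fun_prop) (by fun_prop) fun x hx => (hsin x hx).ne'
  rw [← intervalIntegral.integral_const_mul]
  refine integral_mul_sq_le_integral_deriv_sq_of_riccati hab continuousOn_const hcont
    (fun x hx => ?_) hu ha hb
  have hlin : HasDerivAt (fun t => k * (t - a) + θ) k x := by
    simpa using (((hasDerivAt_id x).sub_const a).const_mul k).add_const θ
  have hs := (hsin x (Ioo_subset_Icc_self hx)).ne'
  refine ((((hasDerivAt_cos _).comp x hlin).const_mul k).div ((hasDerivAt_sin _).comp x hlin)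
    hs).congr_deriv ?_
  simp only [Function.comp_apply]
  field_simp
  ring

theorem sq_pi_div_mul_integral_sq_le_integral_deriv_sq {a b : ℝ} (hab : a < b) {u : ℝ → ℝ}
    (hu : ContDiff ℝ 1 u) (ha : u a = 0) (hb : u b = 0) :
    (π / (b - a)) ^ 2 * ∫ x in a..b, u x ^ 2 ≤ ∫ x in a..b, deriv u x ^ 2 := by
  have hL : 0 < b - a := sub_pos.2 hab
  refine le_of_tendsto (x := 𝓝[<] (π / (b - a)))
    (by fun_prop : Continuous fun k : ℝ => k ^ 2 * ∫ x in a..b, u x ^ 2).continuousWithinAt ?_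
  filter_upwards [Ioo_mem_nhdsLT (div_pos pi_pos hL)] with k hk
  exact sq_mul_integral_sq_le_integral_deriv_sq_of_mul_lt_pi hab.le hk.1.le
    ((lt_div_iff₀ hL).1 hk.2) hu ha hb

theorem sq_pi_le_integral_deriv_sq {u : ℝ → ℝ} (hu : ContDiff ℝ 1 u) (h0 : u 0 = 0)
    (h1 : u 1 = 0) (hnorm : ∫ x in (0:ℝ)..1, u x ^ 2 = 1) :
    π ^ 2 ≤ ∫ x in (0:ℝ)..1, deriv u x ^ 2 := by
  simpa [hnorm] using sq_pi_div_mul_integral_sq_le_integral_deriv_sq zero_lt_one hu h0 h1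

theorem integral_deriv_sub_slope_sq_le {a b : ℝ} (hab : a < b) {u : ℝ → ℝ}
    (hu : ContDiff ℝ 1 u) :
    ∫ x in a..b, (deriv u x - slope u a b) ^ 2 ≤ ∫ x in a..b, deriv u x ^ 2 := by
  have hu' : ∀ x, HasDerivAt u (deriv u x) x := fun x =>
    ((hu.differentiable one_ne_zero) x).hasDerivAt
  have hκ : u b - u a = slope u a b * (b - a) := by
    rw [slope_def_field, div_mul_cancel₀ _ (sub_pos.2 hab).ne']
  have hdiff : ∫ x in a..b, ((deriv u x - slope u a b) ^ 2 - deriv u x ^ 2) =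
      slope u a b ^ 2 * (b - a) - 2 * slope u a b * (u b - u a) :=
    (intervalIntegral.integral_eq_sub_of_hasDerivAt
      (f := fun x => slope u a b ^ 2 * x - 2 * slope u a b * u x)
      (fun x _ => (((hasDerivAt_id x).const_mul _).sub ((hu' x).const_mul _)).congr_deriv
        (by ring))
      (Continuous.intervalIntegrable (by fun_prop) _ _)).trans (by ring)
  rw [intervalIntegral.integral_sub (g := fun x => deriv u x ^ 2)
    (Continuous.intervalIntegrable (by fun_prop) _ _)
    (Continuous.intervalIntegrable (by fun_prop) _ _), hκ] at hdiff
  nlinarith [sq_nonneg (slope u a b), sub_pos.2 hab]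

theorem add_sq_le_one_add_mul_sq_add_one_add_inv_mul_sq {ε : ℝ} (hε : 0 < ε) (p q : ℝ) :
    (p + q) ^ 2 ≤ (1 + ε) * p ^ 2 + (1 + ε⁻¹) * q ^ 2 := by
  have := div_nonneg (sq_nonneg (ε * p - q)) hε.le
  field_simp at this ⊢
  nlinarith

theorem sq_add_slope_mul_sub_le {f : ℝ → ℝ} {a b x : ℝ} (hab : a < b) (hx : x ∈ Icc a b) :
    (f a + slope f a b * (x - a)) ^ 2 ≤ f a ^ 2 + f b ^ 2 := by
  have hL : 0 < b - a := sub_pos.2 hab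
  obtain ⟨t, ht0, ht1, rfl⟩ : ∃ t, 0 ≤ t ∧ t ≤ 1 ∧ a + t * (b - a) = x :=
    ⟨(x - a) / (b - a), div_nonneg (by linarith [hx.1]) hL.le,
      (div_le_one hL).2 (by linarith [hx.2]), by field_simp; ring⟩
  have hconv : f a + slope f a b * (a + t * (b - a) - a) = (1 - t) * f a + t * f b := by
    rw [slope_def_field]
    field_simp
    ring
  rw [hconv]
  nlinarith [sq_nonneg (f a - f b), mul_nonneg ht0 (sub_nonneg.2 ht1), sq_nonneg (f a),
    sq_nonneg (f b)]

theorem sq_pi_div_mul_integral_sub_interpolant_sq_le {a b : ℝ} (hab : a < b) {u : ℝ → ℝ}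
    (hu : ContDiff ℝ 1 u) :
    (π / (b - a)) ^ 2 * ∫ x in a..b, (u x - (u a + slope u a b * (x - a))) ^ 2 ≤
      ∫ x in a..b, deriv u x ^ 2 := by
  have hκ : u b - u a = slope u a b * (b - a) := by
    rw [slope_def_field, div_mul_cancel₀ _ (sub_pos.2 hab).ne']
  have hdv : ∀ x, deriv (fun x => u x - (u a + slope u a b * (x - a))) x =
      deriv u x - slope u a b := fun x =>
    ((((hu.differentiable one_ne_zero) x).hasDerivAt).sub
      ((((hasDerivAt_id x).sub_const a).const_mul _).const_add (u a))).deriv.trans (by simp)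
  have hW := sq_pi_div_mul_integral_sq_le_integral_deriv_sq hab
    (u := fun x => u x - (u a + slope u a b * (x - a))) (hu.sub (by fun_prop)) (by simp)
    (by linarith)
  simp only [hdv] at hW
  exact hW.trans (integral_deriv_sub_slope_sq_le hab hu)

theorem mul_integral_sq_le_integral_deriv_sq_add_boundary {a b μ ε : ℝ} (hab : a < b)
    (hμ0 : 0 ≤ μ) (hμ : μ ≤ (π / (b - a)) ^ 2) (hε : 0 < ε) {u : ℝ → ℝ}
    (hu : ContDiff ℝ 1 u) :
    μ * ∫ x in a..b, u x ^ 2 ≤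
      (1 + ε) * (∫ x in a..b, deriv u x ^ 2) + μ * (1 + ε⁻¹) * (b - a) * (u a ^ 2 + u b ^ 2) := by
  have hW := sq_pi_div_mul_integral_sub_interpolant_sq_le hab hu
  set ℓ : ℝ → ℝ := fun x => u a + slope u a b * (x - a)
  have hμv : μ * ∫ x in a..b, (u x - ℓ x) ^ 2 ≤ ∫ x in a..b, deriv u x ^ 2 :=
    (mul_le_mul_of_nonneg_right hμ
      (intervalIntegral.integral_nonneg hab.le fun x _ => sq_nonneg _)).trans hW
  have hint := intervalIntegral.integral_mono_on (μ := volume) hab.le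
    (f := fun x => u x ^ 2)
    (g := fun x => (1 + ε) * (u x - ℓ x) ^ 2 + (1 + ε⁻¹) * (u a ^ 2 + u b ^ 2))
    (Continuous.intervalIntegrable (by fun_prop) _ _)
    (Continuous.intervalIntegrable (by fun_prop) _ _) fun x hx =>
      (sub_add_cancel (u x) (ℓ x) ▸ add_sq_le_one_add_mul_sq_add_one_add_inv_mul_sq hε _ _).trans
        (add_le_add le_rfl (mul_le_mul_of_nonneg_left (sq_add_slope_mul_sub_le hab hx)
          (add_pos one_pos (inv_pos.2 hε)).le))
  rw [intervalIntegral.integral_add (f := fun x => (1 + ε) * (u x - ℓ x) ^ 2)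
    (Continuous.intervalIntegrable (by fun_prop) _ _) intervalIntegrable_const,
    intervalIntegral.integral_const_mul, intervalIntegral.integral_const, smul_eq_mul] at hint
  calc μ * ∫ x in a..b, u x ^ 2
      ≤ μ * ((1 + ε) * (∫ x in a..b, (u x - ℓ x) ^ 2) +
          (b - a) * ((1 + ε⁻¹) * (u a ^ 2 + u b ^ 2))) :=
        mul_le_mul_of_nonneg_left hint hμ0
    _ = (1 + ε) * (μ * ∫ x in a..b, (u x - ℓ x) ^ 2) +
          μ * (1 + ε⁻¹) * (b - a) * (u a ^ 2 + u b ^ 2) := by ring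
    _ ≤ _ := add_le_add (mul_le_mul_of_nonneg_left hμv (by positivity)) le_rfl

theorem mul_integral_sq_le_integral_deriv_sq_add_sq_of_mem_Ioo {a b x₁ μ ε : ℝ}
    (hx₁ : x₁ ∈ Ioo a b) (hμ0 : 0 ≤ μ) (hμa : μ ≤ (π / (x₁ - a)) ^ 2)
    (hμb : μ ≤ (π / (b - x₁)) ^ 2) (hε : 0 < ε) {u : ℝ → ℝ} (hu : ContDiff ℝ 1 u)
    (ha : u a = 0) (hb : u b = 0) :
    μ * ∫ x in a..b, u x ^ 2 ≤
      (1 + ε) * (∫ x in a..b, deriv u x ^ 2) + μ * (1 + ε⁻¹) * (b - a) * u x₁ ^ 2 := by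
  have hl := mul_integral_sq_le_integral_deriv_sq_add_boundary hx₁.1 hμ0 hμa hε hu
  have hr := mul_integral_sq_le_integral_deriv_sq_add_boundary hx₁.2 hμ0 hμb hε hu
  rw [← intervalIntegral.integral_add_adjacent_intervals (b := x₁)
      (Continuous.intervalIntegrable (by fun_prop) _ _)
      (Continuous.intervalIntegrable (by fun_prop) _ _),
    ← intervalIntegral.integral_add_adjacent_intervals (b := x₁) (f := fun x => deriv u x ^ 2)
      ((hu.continuous_deriv le_rfl).pow 2 |>.intervalIntegrable _ _)
      ((hu.continuous_deriv le_rfl).pow 2 |>.intervalIntegrable _ _)]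
  rw [ha] at hl
  rw [hb] at hr
  linarith

theorem sq_pi_mul_one_add_le_two_mul_integral_deriv_sq {lam x₁ : ℝ} (hlam : lam < 1)
    (hx₁ : x₁ ∈ Ioo 0 1) (hl : x₁ ≤ lam) (hr : 1 - x₁ ≤ lam) {u : ℝ → ℝ}
    (hu : ContDiff ℝ 1 u) (h0 : u 0 = 0) (h1 : u 1 = 0) (hnorm : ∫ x in (0:ℝ)..1, u x ^ 2 = 1)
    (hsmall : u x₁ ^ 2 ≤ (1 - lam) ^ 2 / 2) :
    π ^ 2 * (1 + lam) ≤ 2 * lam * ∫ x in (0:ℝ)..1, deriv u x ^ 2 := by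
  have hlam0 : 0 < lam := hx₁.1.trans_le hl
  have hlam1 : 0 < 1 - lam := sub_pos.2 hlam
  have hμ : ∀ y, 0 < y → y ≤ lam → (π / lam) ^ 2 ≤ (π / y) ^ 2 := fun y hy hyl =>
    pow_le_pow_left₀ (by positivity) (div_le_div_of_nonneg_left pi_pos.le hy hyl) 2
  -- with `1 + ε = 1 / λ` and `1 + ε⁻¹ = 1 / (1 - λ)` the error term is at most `π² (1 - λ) / 2`
  have key := mul_integral_sq_le_integral_deriv_sq_add_sq_of_mem_Ioo (ε := (1 - lam) / lam)
    hx₁ (by positivity) (hμ _ (by simpa using hx₁.1) (by simpa using hl))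
    (hμ _ (by linarith [hx₁.2]) hr) (div_pos hlam1 hlam0) hu h0 h1
  rw [hnorm] at key
  field_simp at key
  nlinarith [mul_le_mul_of_nonneg_left hsmall (sq_nonneg π)]

theorem integral_mul_sq_le_of_le {a b α β M δ : ℝ} {c u : ℝ → ℝ} (hαβ : α ≤ β)
    (hsub : Icc α β ⊆ Ioo a b) (hM : ∀ x ∈ Ioo a b, c x ≤ M) (hδ : ∀ x ∈ Icc α β, c x ≤ M - δ)
    (hu : Continuous u) (hI : IntervalIntegrable (fun x => c x * u x ^ 2) volume a b) :
    ∫ x in a..b, c x * u x ^ 2 ≤ M * (∫ x in a..b, u x ^ 2) - δ * ∫ x in α..β, u x ^ 2 := by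
  have haα : a ≤ α := (hsub (left_mem_Icc.2 hαβ)).1.le
  have hβb : β ≤ b := (hsub (right_mem_Icc.2 hαβ)).2.le
  have hg : IntervalIntegrable (fun x => M * u x ^ 2 - c x * u x ^ 2) volume a b :=
    (Continuous.intervalIntegrable (by fun_prop) _ _).sub hI
  have hg_nonneg : ∀ᵐ x ∂volume.restrict (Ioc a b), 0 ≤ M * u x ^ 2 - c x * u x ^ 2 := by
    rw [← Measure.restrict_congr_set Ioo_ae_eq_Ioc]
    exact ae_restrict_of_forall_mem measurableSet_Ioo fun x hx => by
      nlinarith [hM x hx, sq_nonneg (u x)]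
  have hαβ_le := intervalIntegral.integral_mono_interval haα hαβ hβb hg_nonneg hg
  have hδ_le := intervalIntegral.integral_mono_on (μ := volume) hαβ
    (Continuous.intervalIntegrable (by fun_prop : Continuous fun x => δ * u x ^ 2) _ _)
    (hg.mono_set (uIcc_subset_uIcc (mem_uIcc_of_le haα (hαβ.trans hβb))
      (mem_uIcc_of_le (haα.trans hαβ) hβb)))
    fun x hx => by nlinarith [hδ x hx, sq_nonneg (u x)]
  rw [intervalIntegral.integral_sub (Continuous.intervalIntegrable (by fun_prop) _ _) hI,
    intervalIntegral.integral_const_mul] at hαβ_le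
  rw [intervalIntegral.integral_const_mul] at hδ_le
  linarith

theorem exists_mem_Icc_lt_of_integral_lt {α β s : ℝ} {f : ℝ → ℝ} (hαβ : α ≤ β)
    (hf : IntervalIntegrable f volume α β) (h : ∫ x in α..β, f x < s * (β - α)) :
    ∃ x ∈ Icc α β, f x < s := by
  by_contra! hs
  have := intervalIntegral.integral_mono_on hαβ intervalIntegrable_const hf hs
  rw [intervalIntegral.integral_const, smul_eq_mul] at this
  linarith

theorem exists_Icc_subset_forall_le_sub {U : Set ℝ} {c : ℝ → ℝ} {x₀ M : ℝ} (hU : IsOpen U)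
    (hc : ContinuousOn c U) (hx₀ : x₀ ∈ U) (hlt : c x₀ < M) :
    ∃ δ > 0, ∃ α β, α < β ∧ Icc α β ⊆ U ∧ ∀ x ∈ Icc α β, c x ≤ M - δ := by
  have hnhds : {x | c x < M - (M - c x₀) / 2} ∩ U ∈ 𝓝 x₀ :=
    inter_mem (hc.continuousAt (hU.mem_nhds hx₀) (Iio_mem_nhds (by linarith)))
      (hU.mem_nhds hx₀)
  obtain ⟨r, hr, hball⟩ := Metric.mem_nhds_iff.1 hnhds
  have hIcc : Icc (x₀ - r / 2) (x₀ + r / 2) ⊆ {x | c x < M - (M - c x₀) / 2} ∩ U := by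
    rw [← closedBall_eq_Icc]
    exact (Metric.closedBall_subset_ball (half_lt_self hr)).trans hball
  exact ⟨(M - c x₀) / 2, by linarith, x₀ - r / 2, x₀ + r / 2, by linarith,
    fun x hx => (hIcc hx).2, fun x hx => (hIcc hx).1.le⟩

theorem rayleighSet1D_nonempty {a : ℝ} (ha : 0 < a) (c : ℝ → ℝ) :
    (rayleighSet1D a c).Nonempty := by
  refine ⟨_, fun x => √(2 / a) * sin (π / a * x), by fun_prop, by simp, ?_, ?_, rfl⟩
  · simp [div_mul_cancel₀ π ha.ne']
  · simp only [mul_pow, sq_sqrt (div_pos two_pos ha).le]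
    rw [intervalIntegral.integral_const_mul,
      intervalIntegral.integral_comp_mul_left (fun y => sin y ^ 2) (div_pos pi_pos ha).ne',
      integral_sin_sq]
    simp [div_mul_cancel₀ π ha.ne']
    field_simp

theorem exists_pos_le_integral_deriv_sq_sub_integral_mul_sq {c : ℝ → ℝ} {α β δ : ℝ}
    (hαβ : α < β) (hsub : Icc α β ⊆ Ioo 0 1) (hc : ∀ x ∈ Ioo (0:ℝ) 1, c x ≤ π ^ 2)
    (hδ : 0 < δ) (hcδ : ∀ x ∈ Icc α β, c x ≤ π ^ 2 - δ) :
    ∃ m > 0, ∀ u : ℝ → ℝ, ContDiff ℝ 1 u → u 0 = 0 → u 1 = 0 →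
      ∫ x in (0:ℝ)..1, u x ^ 2 = 1 → IntervalIntegrable (fun x => c x * u x ^ 2) volume 0 1 →
      m ≤ (∫ x in (0:ℝ)..1, deriv u x ^ 2) - ∫ x in (0:ℝ)..1, c x * u x ^ 2 := by
  have hα : 0 < α := (hsub (left_mem_Icc.2 hαβ.le)).1
  have hβ : β < 1 := (hsub (right_mem_Icc.2 hαβ.le)).2
  set lam := max β (1 - α)
  have hlam : lam < 1 := max_lt hβ (by linarith)
  have hlam0 : 0 < lam := lt_max_of_lt_left (by linarith)
  refine ⟨min (δ * ((1 - lam) ^ 2 / 2 * (β - α))) (π ^ 2 * (1 - lam) / (2 * lam)),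
    lt_min (by nlinarith [mul_pos (pow_pos (sub_pos.2 hlam) 2) (sub_pos.2 hαβ)])
      (div_pos (mul_pos (pow_pos pi_pos 2) (sub_pos.2 hlam)) (by positivity)), ?_⟩
  intro u hu h0 h1 hnorm hI
  have hK := sq_pi_le_integral_deriv_sq hu h0 h1 hnorm
  have hcu := integral_mul_sq_le_of_le hαβ.le hsub hc hcδ hu.continuous hI
  rw [hnorm, mul_one] at hcu
  have hJ : 0 ≤ ∫ x in α..β, u x ^ 2 :=
    intervalIntegral.integral_nonneg hαβ.le fun _ _ => sq_nonneg _
  rcases le_or_gt ((1 - lam) ^ 2 / 2 * (β - α)) (∫ x in α..β, u x ^ 2) with hJ0 | hJ0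
  · exact (min_le_left _ _).trans (by nlinarith)
  · obtain ⟨x₁, hx₁, hsmall⟩ := exists_mem_Icc_lt_of_integral_lt hαβ.le
      (Continuous.intervalIntegrable (by fun_prop) _ _) hJ0
    have hgap := sq_pi_mul_one_add_le_two_mul_integral_deriv_sq hlam (hsub hx₁)
      (le_max_of_le_left hx₁.2) (le_max_of_le_right (by linarith [hx₁.1])) hu h0 h1 hnorm
      hsmall.le
    have hC := hcu.trans (sub_le_self _ (mul_nonneg hδ.le hJ))
    refine (min_le_right _ _).trans ?_
    rw [div_le_iff₀ (by positivity)]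
    nlinarith [mul_le_mul_of_nonneg_left hC hlam0.le]

/-- If c ≤ π² on (0,1) and c is not identically π², then the first eigenvalue of
−(u'' + c·u) with Dirichlet conditions on (0,1) is strictly positive. -/
theorem first_eigenvalue_positive_of_c_le_pi_sq (c : ℝ → ℝ)
    (hc_cont : ContinuousOn c (Set.Ioo (0:ℝ) 1))
    (hc_le : ∀ x ∈ Set.Ioo (0:ℝ) 1, c x ≤ Real.pi ^ 2)
    (hc_ne : ∃ x ∈ Set.Ioo (0:ℝ) 1, c x ≠ Real.pi ^ 2) :
    0 < sInf (rayleighSet1D 1 c) := by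
  obtain ⟨x₀, hx₀, hne⟩ := hc_ne
  obtain ⟨δ, hδ, α, β, hαβ, hsub, hcδ⟩ :=
    exists_Icc_subset_forall_le_sub isOpen_Ioo hc_cont hx₀ ((hc_le x₀ hx₀).lt_of_ne hne)
  obtain ⟨m, hm, hbound⟩ :=
    exists_pos_le_integral_deriv_sq_sub_integral_mul_sq hαβ hsub hc_le hδ hcδ
  refine (lt_min hm (pow_pos pi_pos 2)).trans_le
    (le_csInf (rayleighSet1D_nonempty one_pos c) ?_)
  rintro _ ⟨u, hu, hu0, hu1, hnorm, rfl⟩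
  by_cases hI : IntervalIntegrable (fun x => c x * u x ^ 2) volume 0 1
  · exact (min_le_left _ _).trans (hbound u hu hu0 hu1 hnorm hI)
  · -- the junk value `∫ c u² = 0` leaves only the Dirichlet energy, which is at least `π²`
    rw [intervalIntegral.integral_undef hI, sub_zero]
    exact (min_le_right _ _).trans (sq_pi_le_integral_deriv_sq hu hu0 hu1 hnorm)
end

section
/- Let Ω ⊂ ℝ^N be a connected bounded open set, c continuous on Ω with c ≤ 0, and u ∈ C²(Ω) with Δu + c·u ≥ 0 in Ω. If u attains a nonnegative maximum at an interior point of Ω, then u is constant. -/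
/-!
The points of `Ω` where `u` attains its maximum `M ≥ 0` form a relatively closed set; it is also
open by E. Hopf's boundary point lemma, so by connectedness it is all of `Ω`.

Suppose `u = M` at `x₀` but `u z < M` for some `z` near `x₀`. The largest ball `B(z, ρ)` on which
`u < M` touches `{u = M}` at a point `q`, an interior maximum of `u`, so `∇u(q) = 0`. On the
annulus `ρ / 2 ≤ ‖x - z‖ ≤ ρ` the function `w = u - M + δ b` with Hopf's barrier
`b x = exp (-α ‖x - z‖²) - exp (-α ρ²)` satisfies `Δw + c w ≥ -c M + δ (Δb + c b) > 0` for large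
`α`, and `w ≤ 0` on both boundary spheres for small `δ`, hence `w ≤ 0` on the annulus. Since `w q = 0`, the derivative
of `w` at `q` towards `z` is `≤ 0`, which forces the outward derivative of `u` at `q` to be
positive, contradicting `∇u(q) = 0`.
-/

noncomputable def lap {n : ℕ} (u : EuclideanSpace ℝ (Fin n) → ℝ)
    (x : EuclideanSpace ℝ (Fin n)) : ℝ :=
  ∑ i : Fin n,
    fderiv ℝ (fun y => fderiv ℝ u y (EuclideanSpace.single i (1 : ℝ))) x
      (EuclideanSpace.single i (1 : ℝ))

open Metric Set Filter Topology InnerProductSpace Laplacian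

section

variable {E F : Type*} [NormedAddCommGroup E] [NormedSpace ℝ E] [NormedAddCommGroup F]
  [NormedSpace ℝ F]

lemma ContDiffAt.differentiableAt_fderiv {f : E → F} {a : E} (hf : ContDiffAt ℝ 2 f a) :
    DifferentiableAt ℝ (fderiv ℝ f) a :=
  (hf.fderiv_right (m := 1) (by norm_num)).differentiableAt one_ne_zero

lemma fderiv_fderiv_apply {f : E → F} {a : E} (hf : DifferentiableAt ℝ (fderiv ℝ f) a)
    (v w : E) : fderiv ℝ (fderiv ℝ f) a v w = fderiv ℝ (fun x => fderiv ℝ f x w) a v := by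
  simp [fderiv_clm_apply hf (differentiableAt_const w)]

/-- On the line `t ↦ a + t • v` a positive second derivative would make `a` a local minimum as
well, so `f` would be constant on the line near `a` and its second derivative zero. -/
lemma fderiv_fderiv_apply_self_nonpos_of_isLocalMax {f : E → ℝ} {a : E} (hf : ContDiffAt ℝ 2 f a)
    (hmax : IsLocalMax f a) (v : E) : fderiv ℝ (fderiv ℝ f) a v v ≤ 0 := by
  set L : ℝ → E := fun t => a + t • v
  have hL : ∀ t, HasDerivAt L v t := fun t =>
    (((hasDerivAt_id t).smul_const v).const_add a).congr_deriv (one_smul ℝ v)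
  have hL0 : L 0 = a := by simp [L]
  have hLa : Tendsto L (𝓝 0) (𝓝 a) := hL0 ▸ (hL 0).continuousAt.tendsto
  have hderiv : deriv (f ∘ L) =ᶠ[𝓝 0] fun t => fderiv ℝ f (L t) v := by
    have hdiff : ∀ᶠ x in 𝓝 a, DifferentiableAt ℝ f x :=
      (hf.eventually (by simp)).mono fun x hx => hx.differentiableAt (by simp)
    filter_upwards [hLa.eventually hdiff] with t ht
    exact (ht.hasFDerivAt.comp_hasDerivAt t (hL t)).deriv
  have hderiv2 : HasDerivAt (fun t => fderiv ℝ f (L t) v) (fderiv ℝ (fderiv ℝ f) a v v) 0 := by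
    have := (hL0 ▸ hf.differentiableAt_fderiv.hasFDerivAt).comp_hasDerivAt 0 (hL 0)
    simpa [hL0] using this.clm_apply (hasDerivAt_const 0 v)
  have hgmax : IsLocalMax (f ∘ L) 0 := by
    rw [← hL0] at hmax
    exact hmax.comp_continuous (hL 0).continuousAt
  by_contra! hpos
  have hgmin : IsLocalMin (f ∘ L) 0 :=
    isLocalMin_of_deriv_deriv_pos (by rwa [hderiv.deriv_eq, hderiv2.deriv])
      hgmax.deriv_eq_zero (hf.continuousAt.comp_of_eq (hL 0).continuousAt hL0)
  have hconst : f ∘ L =ᶠ[𝓝 0] fun _ => (f ∘ L) 0 := by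
    filter_upwards [hgmin, hgmax] with t h₁ h₂ using le_antisymm h₂ h₁
  have hzero : (fun t => fderiv ℝ f (L t) v) =ᶠ[𝓝 0] fun _ => 0 := by
    filter_upwards [hderiv, hconst.eventuallyEq_nhds] with t ht hc
    rw [← ht, hc.deriv_eq, deriv_const]
  have h := hderiv2.deriv
  rw [hzero.deriv_eq, deriv_const] at h
  linarith

lemma sub_mem_posTangentConeAt_annulus {y q : E} {ρ : ℝ} (hq : q ∈ sphere y ρ) :
    y - q ∈ posTangentConeAt (closedBall y ρ \ ball y (ρ / 2)) q := by
  have hρ : 0 ≤ ρ := mem_sphere.1 hq ▸ dist_nonneg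
  refine mem_posTangentConeAt_of_frequently_mem (Eventually.frequently ?_)
  filter_upwards [Ioo_mem_nhdsGT (show (0 : ℝ) < 1 / 2 by norm_num)] with t ht
  have hdist : dist (q + t • (y - q)) y = (1 - t) * ρ := by
    rw [dist_eq_norm, show q + t • (y - q) - y = (1 - t) • (q - y) by module, norm_smul,
      Real.norm_of_nonneg (by linarith [ht.2]), ← dist_eq_norm, mem_sphere.1 hq]
  refine ⟨mem_closedBall.2 ?_, fun h => ?_⟩
  · rw [hdist]; nlinarith [ht.1]
  · rw [mem_ball, hdist] at h; nlinarith [ht.2]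

end

section

variable {E : Type*} [NormedAddCommGroup E]

noncomputable def hopfBarrier (y : E) (α ρ : ℝ) (x : E) : ℝ :=
  Real.exp (-α * ‖x - y‖ ^ 2) - Real.exp (-α * ρ ^ 2)

variable (y : E) (α ρ : ℝ)

lemma hopfBarrier_le_one (hα : 0 ≤ α) (x : E) : hopfBarrier y α ρ x ≤ 1 := by
  have h₁ : Real.exp (-α * ‖x - y‖ ^ 2) ≤ 1 :=
    Real.exp_le_one_iff.2 (by nlinarith [norm_nonneg (x - y)])
  have h₂ := Real.exp_pos (-α * ρ ^ 2)
  unfold hopfBarrier; linarith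

lemma hopfBarrier_eq_zero {x : E} (hx : x ∈ sphere y ρ) : hopfBarrier y α ρ x = 0 := by
  rw [hopfBarrier, ← dist_eq_norm, mem_sphere.1 hx, sub_self]

variable [InnerProductSpace ℝ E]

lemma hasFDerivAt_hopfBarrier (x : E) :
    HasFDerivAt (hopfBarrier y α ρ)
      ((-2 * α * Real.exp (-α * ‖x - y‖ ^ 2)) • innerSL ℝ (x - y)) x := by
  refine ((((hasFDerivAt_id x).sub_const y).norm_sq.const_mul (-α)).exp.sub_const
    _).congr_fderiv ?_
  ext v
  simp only [id_eq, neg_mul, map_sub, ContinuousLinearMap.comp_id, neg_smul, smul_neg, neg_apply,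
    smul_apply, sub_apply, coe_innerSL_apply, nsmul_eq_mul, Nat.cast_ofNat, smul_eq_mul, neg_inj]
  ring

lemma fderiv_hopfBarrier_apply (x v : E) :
    fderiv ℝ (hopfBarrier y α ρ) x v = -2 * α * Real.exp (-α * ‖x - y‖ ^ 2) * ⟪x - y, v⟫_ℝ := by
  simp [(hasFDerivAt_hopfBarrier y α ρ x).fderiv, inner_sub_left]

lemma contDiff_hopfBarrier : ContDiff ℝ 2 (hopfBarrier y α ρ) :=
  ((contDiff_const.mul ((contDiff_norm_sq ℝ).comp (contDiff_id.sub contDiff_const))).exp).sub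
    contDiff_const

lemma fderiv_fderiv_hopfBarrier_apply_self (x v : E) :
    fderiv ℝ (fderiv ℝ (hopfBarrier y α ρ)) x v v =
      Real.exp (-α * ‖x - y‖ ^ 2) * (4 * α ^ 2 * ⟪x - y, v⟫_ℝ ^ 2 - 2 * α * ‖v‖ ^ 2) := by
  rw [fderiv_fderiv_apply (contDiff_hopfBarrier y α ρ).contDiffAt.differentiableAt_fderiv]
  simp only [fderiv_hopfBarrier_apply]
  have hexp := (((hasFDerivAt_id x).sub_const y).norm_sq.const_mul (-α)).exp
  have hinner := ((hasFDerivAt_id x).sub_const y).inner ℝ (hasFDerivAt_const v x)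
  have h : HasFDerivAt (fun z => -2 * α * Real.exp (-α * ‖z - y‖ ^ 2) * ⟪z - y, v⟫_ℝ) _ x :=
    (hexp.const_mul (-2 * α)).fun_mul hinner
  rw [h.fderiv]
  simp only [neg_mul, id_eq, neg_smul, inner_sub_left, map_sub, ContinuousLinearMap.comp_id,
    smul_neg, neg_neg, add_apply, neg_apply, smul_apply, ContinuousLinearMap.comp_apply,
    ContinuousLinearMap.prod_apply, ContinuousLinearMap.id_apply, zero_apply, fderivInnerCLM_apply,
    inner_zero_right, inner_self_eq_norm_sq_to_K, Real.ringHom_apply, zero_add, smul_eq_mul,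
    sub_apply, coe_innerSL_apply, nsmul_eq_mul, Nat.cast_ofNat]
  ring

variable [FiniteDimensional ℝ E]

lemma laplacian_hopfBarrier (x : E) :
    Δ (hopfBarrier y α ρ) x = Real.exp (-α * ‖x - y‖ ^ 2) *
      (4 * α ^ 2 * ‖x - y‖ ^ 2 - 2 * α * Module.finrank ℝ E) := by
  set b := stdOrthonormalBasis ℝ E
  have hsum : ∑ i, ⟪x - y, b i⟫_ℝ ^ 2 = ‖x - y‖ ^ 2 := by
    simpa [sq, real_inner_comm, real_inner_self_eq_norm_sq] using
      b.sum_inner_mul_inner (x - y) (x - y)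
  rw [laplacian_eq_iteratedFDeriv_stdOrthonormalBasis]
  simp only [iteratedFDeriv_two_apply, Matrix.cons_val_zero, Matrix.cons_val_one,
    fderiv_fderiv_hopfBarrier_apply_self]
  rw [← Finset.mul_sum, Finset.sum_sub_distrib, ← Finset.mul_sum, hsum]
  simp only [OrthonormalBasis.norm_eq_one, one_pow, mul_one, Finset.sum_const, Finset.card_univ, Fintype.card_fin,
    nsmul_eq_mul]
  ring

/-- Away from the centre the term `4 α² ‖x - y‖²` of the Laplacian dominates for large `α`. -/
lemma exists_laplacian_hopfBarrier_add_mul_pos {ρ : ℝ} (hρ : 0 < ρ) (C : ℝ) :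
    ∃ α > 0, ∀ x : E, ρ / 2 ≤ ‖x - y‖ → ∀ c ∈ Icc (-C) 0,
      0 < Δ (hopfBarrier y α ρ) x + c * hopfBarrier y α ρ x := by
  set d : ℝ := (Module.finrank ℝ E : ℝ)
  have hd : 0 ≤ d := Nat.cast_nonneg _
  refine ⟨(2 * d + |C| + 1) / ρ ^ 2 + 1, by positivity, fun x hx c hc => ?_⟩
  set α := (2 * d + |C| + 1) / ρ ^ 2 + 1
  have hα : 1 ≤ α := le_add_of_nonneg_left (by positivity)
  have hαρ : α * ρ ^ 2 = 2 * d + |C| + 1 + ρ ^ 2 := by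
    simp only [α]; field_simp
  have hdom : C < 4 * α ^ 2 * ‖x - y‖ ^ 2 - 2 * α * d := by
    have : ρ ^ 2 ≤ 4 * ‖x - y‖ ^ 2 := by nlinarith
    nlinarith [hαρ, le_abs_self C, abs_nonneg C]
  set e := Real.exp (-α * ‖x - y‖ ^ 2)
  have he : 0 < e := Real.exp_pos _
  have hbe : hopfBarrier y α ρ x ≤ e := sub_le_self _ (Real.exp_pos _).le
  rw [laplacian_hopfBarrier]
  calc 0 < e * (4 * α ^ 2 * ‖x - y‖ ^ 2 - 2 * α * d - C) := mul_pos he (by linarith)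
    _ = e * (4 * α ^ 2 * ‖x - y‖ ^ 2 - 2 * α * d) + -C * e := by ring
    _ ≤ e * (4 * α ^ 2 * ‖x - y‖ ^ 2 - 2 * α * d) + c * hopfBarrier y α ρ x := by
      have h₁ : -C * e ≤ c * e := mul_le_mul_of_nonneg_right hc.1 he.le
      have h₂ : c * e ≤ c * hopfBarrier y α ρ x := mul_le_mul_of_nonpos_left hbe hc.2
      linarith

end

section

variable {E : Type*} [NormedAddCommGroup E] [InnerProductSpace ℝ E] [FiniteDimensional ℝ E]

lemma laplacian_nonpos_of_isLocalMax {f : E → ℝ} {a : E} (hf : ContDiffAt ℝ 2 f a)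
    (hmax : IsLocalMax f a) : Δ f a ≤ 0 := by
  rw [laplacian_eq_iteratedFDeriv_stdOrthonormalBasis]
  refine Finset.sum_nonpos fun i _ => ?_
  simpa [iteratedFDeriv_two_apply] using fderiv_fderiv_apply_self_nonpos_of_isLocalMax hf hmax _

lemma nonpos_of_laplacian_add_mul_pos {K U : Set E} (hK : IsCompact K) (hU : IsOpen U)
    (hUK : U ⊆ K) {w c : E → ℝ} (hw : ContinuousOn w K) (hw₂ : ContDiffOn ℝ 2 w U)
    (hc : ∀ x ∈ U, c x ≤ 0) (hLw : ∀ x ∈ U, 0 < Δ w x + c x * w x)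
    (hbdry : ∀ x ∈ K \ U, w x ≤ 0) : ∀ x ∈ K, w x ≤ 0 := by
  intro x hx
  obtain ⟨z, hzK, hzmax⟩ := hK.exists_isMaxOn ⟨x, hx⟩ hw
  refine (hzmax hx).trans ?_
  by_cases hzU : z ∈ U
  · have hΔ : Δ w z ≤ 0 := laplacian_nonpos_of_isLocalMax (hw₂.contDiffAt (hU.mem_nhds hzU))
      (hzmax.isLocalMax (mem_of_superset (hU.mem_nhds hzU) hUK))
    by_contra! hpos
    nlinarith [hLw z hzU, hc z hzU]
  · exact hbdry z ⟨hzK, hzU⟩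

lemma sub_add_mul_hopfBarrier_nonpos {y : E} {ρ α δ M : ℝ} {u c : E → ℝ}
    (hu : ContDiffOn ℝ 2 u (closedBall y ρ)) (hc : ∀ x ∈ ball y ρ, c x ≤ 0)
    (hLu : ∀ x ∈ ball y ρ, 0 ≤ Δ u x + c x * u x) (hM : 0 ≤ M)
    (hle : ∀ x ∈ sphere y ρ, u x ≤ M) (hδ : 0 < δ) (hδle : ∀ x ∈ sphere y (ρ / 2), u x + δ ≤ M)
    (hα : 0 ≤ α)
    (hb : ∀ x ∈ ball y ρ \ closedBall y (ρ / 2),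
      0 < Δ (hopfBarrier y α ρ) x + c x * hopfBarrier y α ρ x) :
    ∀ x ∈ closedBall y ρ \ ball y (ρ / 2), u x - M + δ * hopfBarrier y α ρ x ≤ 0 := by
  set b := hopfBarrier y α ρ
  have hUK : ball y ρ \ closedBall y (ρ / 2) ⊆ closedBall y ρ \ ball y (ρ / 2) :=
    sdiff_subset_sdiff ball_subset_closedBall ball_subset_closedBall
  refine nonpos_of_laplacian_add_mul_pos ((isCompact_closedBall y ρ).diff isOpen_ball)
    (isOpen_ball.sdiff isClosed_closedBall) hUK
    (((hu.continuousOn.sub continuousOn_const).add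
      (continuousOn_const.mul (contDiff_hopfBarrier y α ρ).continuous.continuousOn)).mono
      sdiff_subset)
    (((hu.sub contDiffOn_const).add (contDiffOn_const.mul
      (contDiff_hopfBarrier y α ρ).contDiffOn)).mono (sdiff_subset.trans ball_subset_closedBall))
    (fun x hx => hc x hx.1) (fun x hx => ?_) (fun x hx => ?_)
  · have hux : ContDiffAt ℝ 2 u x := hu.contDiffAt (closedBall_mem_nhds_of_mem hx.1)
    have hbx : ContDiffAt ℝ 2 b x := (contDiff_hopfBarrier y α ρ).contDiffAt
    have hΔ : Δ (fun x => u x - M + δ * b x) x = Δ u x + δ * Δ b x := by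
      have h : (fun x => u x - M + δ * b x) = (u - fun _ => M) + δ • b := rfl
      have hu' : ContDiffAt ℝ 2 (u - fun _ => M) x := hux.sub contDiffAt_const
      have hb' : ContDiffAt ℝ 2 (δ • b) x := hbx.const_smul δ
      rw [h, hu'.laplacian_add hb',
        hux.laplacian_sub contDiffAt_const, laplacian_smul δ hbx]
      simp
    rw [hΔ]
    nlinarith [hLu x hx.1, hb x hx, hc x hx.1]
  · obtain ⟨⟨hxρ, hxρ₂⟩, hxU⟩ := hx
    rcases (mem_closedBall.1 hxρ).eq_or_lt with hx | hx
    · rw [show b x = 0 from hopfBarrier_eq_zero y α ρ hx, mul_zero, add_zero, sub_nonpos]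
      exact hle x hx
    · have hx₂ : x ∈ sphere y (ρ / 2) := le_antisymm
        (by by_contra! h; exact hxU ⟨mem_ball.2 hx, by simpa using h⟩) (by simpa using hxρ₂)
      nlinarith [hδle x hx₂, hopfBarrier_le_one y α ρ hα x]

theorem hopf_lemma {y q : E} {ρ : ℝ} (hρ : 0 < ρ) (hq : q ∈ sphere y ρ) {u c : E → ℝ}
    (hu : ContDiffOn ℝ 2 u (closedBall y ρ)) (huq : DifferentiableAt ℝ u q)
    (hc_cont : ContinuousOn c (closedBall y ρ)) (hc : ∀ x ∈ ball y ρ, c x ≤ 0)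
    (hLu : ∀ x ∈ ball y ρ, 0 ≤ Δ u x + c x * u x) (hq₀ : 0 ≤ u q)
    (hlt : ∀ x ∈ ball y ρ, u x < u q) : 0 < fderiv ℝ u q (q - y) := by
  have hqy : ‖q - y‖ = ρ := by rw [← dist_eq_norm, mem_sphere.1 hq]
  have : Nontrivial E := nontrivial_of_ne q y fun h => by simp [h] at hqy; linarith
  have hle : ∀ x ∈ closedBall y ρ, u x ≤ u q := by
    rw [← closure_ball y hρ.ne'] at hu ⊢
    exact le_on_closure (fun x hx => (hlt x hx).le) hu.continuousOn continuousOn_const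
  obtain ⟨δ, hδ, hδle⟩ : ∃ δ > 0, ∀ x ∈ sphere y (ρ / 2), u x + δ ≤ u q := by
    have hS : sphere y (ρ / 2) ⊆ ball y ρ := sphere_subset_ball (by linarith)
    obtain ⟨z, hz, hzmax⟩ := (isCompact_sphere y (ρ / 2)).exists_isMaxOn
      (NormedSpace.sphere_nonempty.2 (by linarith))
      (hu.continuousOn.mono (hS.trans ball_subset_closedBall))
    exact ⟨u q - u z, sub_pos.2 (hlt z (hS hz)), fun x hx => by
      have : u x ≤ u z := hzmax hx
      linarith⟩
  set A := closedBall y ρ \ ball y (ρ / 2)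
  obtain ⟨C, hC⟩ := ((isCompact_closedBall y ρ).diff isOpen_ball).bddBelow_image
    (hc_cont.mono sdiff_subset)
  obtain ⟨α, hα, hb⟩ := exists_laplacian_hopfBarrier_add_mul_pos y hρ (-C)
  have hw := sub_add_mul_hopfBarrier_nonpos hu hc hLu hq₀
    (fun x hx => hle x (sphere_subset_closedBall hx)) hδ hδle hα.le fun x hx => by
      have hxA : x ∈ A := ⟨ball_subset_closedBall hx.1, fun h => hx.2 (ball_subset_closedBall h)⟩
      refine hb x ?_ (c x) ⟨by simpa using hC ⟨x, hxA, rfl⟩, hc x hx.1⟩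
      exact le_of_lt (by simpa [dist_eq_norm] using hx.2)
  have hqA : q ∈ A := ⟨sphere_subset_closedBall hq, by
    simp only [mem_ball, mem_sphere.1 hq, not_lt, half_le_self_iff]; linarith⟩
  have hmax : IsMaxOn (fun x => u x - u q + δ * hopfBarrier y α ρ x) A q := fun x hx => by
    simpa [hopfBarrier_eq_zero y α ρ hq] using hw x hx
  have hderiv :=
    (huq.hasFDerivAt.sub_const (u q)).add ((hasFDerivAt_hopfBarrier y α ρ q).const_mul δ)
  have h := hmax.localize.hasFDerivWithinAt_nonpos hderiv.hasFDerivWithinAt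
    (sub_mem_posTangentConeAt_annulus hq)
  have hinner : ⟪q - y, y - q⟫_ℝ = -ρ ^ 2 := by
    rw [← neg_sub q y, inner_neg_right, real_inner_self_eq_norm_sq, hqy]
  have hflip : fderiv ℝ u q (y - q) = -fderiv ℝ u q (q - y) := by
    rw [← map_neg, neg_sub]
  simp only [add_apply, smul_apply, innerSL_apply_apply,
    hinner, hflip, smul_eq_mul] at h
  have hpos : 0 < δ * (2 * α * Real.exp (-α * ‖q - y‖ ^ 2) * ρ ^ 2) := by positivity
  linarith

lemma eventually_eq_of_laplacian_add_mul_nonneg {Ω : Set E} (hΩ : IsOpen Ω) {c u : E → ℝ}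
    (hc_cont : ContinuousOn c Ω) (hc : ∀ x ∈ Ω, c x ≤ 0) (hu : ContDiffOn ℝ 2 u Ω)
    (hLu : ∀ x ∈ Ω, 0 ≤ Δ u x + c x * u x) {M : ℝ} (hM : 0 ≤ M) (hmax : ∀ x ∈ Ω, u x ≤ M)
    {x₀ : E} (hx₀ : x₀ ∈ Ω) (hx₀M : u x₀ = M) : ∀ᶠ x in 𝓝 x₀, u x = M := by
  obtain ⟨r, hr, hrΩ⟩ : ∃ r > 0, closedBall x₀ (2 * r) ⊆ Ω := by
    obtain ⟨ε, hε, h⟩ := nhds_basis_closedBall.mem_iff.1 (hΩ.mem_nhds hx₀)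
    exact ⟨ε / 2, by positivity, by rwa [mul_div_cancel₀ _ two_ne_zero]⟩
  filter_upwards [ball_mem_nhds x₀ hr] with z hz
  by_contra hzM
  -- `q` is a point of `{u = M}` nearest to `z`, so `u < M` on the open ball through `q` around `z`.
  set F := closedBall x₀ (2 * r) ∩ u ⁻¹' {M}
  have hF : IsClosed F := (hu.continuousOn.mono hrΩ).preimage_isClosed_of_isClosed
    isClosed_closedBall isClosed_singleton
  have hx₀F : x₀ ∈ F := ⟨mem_closedBall_self (by positivity), hx₀M⟩
  obtain ⟨q, hqF, hq⟩ := hF.exists_infDist_eq_dist ⟨x₀, hx₀F⟩ z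
  set ρ := infDist z F
  have hρ : 0 < ρ := (hF.notMem_iff_infDist_pos ⟨x₀, hx₀F⟩).1 fun h => hzM h.2
  have hzρ : closedBall z ρ ⊆ closedBall x₀ (2 * r) := closedBall_subset_closedBall' <| by
    linarith [infDist_le_dist_of_mem (x := z) hx₀F, mem_ball.1 hz]
  have hzΩ : closedBall z ρ ⊆ Ω := hzρ.trans hrΩ
  have hlt : ∀ x ∈ ball z ρ, u x < M := fun x hx =>
    (hmax x (hzΩ (ball_subset_closedBall hx))).lt_of_ne fun hxM =>
      notMem_of_dist_lt_infDist (mem_ball'.1 hx) ⟨hzρ (ball_subset_closedBall hx), hxM⟩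
  have huq : u q = M := hqF.2
  have hqΩ : q ∈ Ω := hrΩ hqF.1
  have hqmax : IsLocalMax u q :=
    mem_of_superset (hΩ.mem_nhds hqΩ) fun x hx => huq ▸ hmax x hx
  have hhopf := hopf_lemma hρ (by rw [mem_sphere, dist_comm, hq]) (hu.mono hzΩ)
    ((hu.contDiffAt (hΩ.mem_nhds hqΩ)).differentiableAt (by norm_num)) (hc_cont.mono hzΩ)
    (fun x hx => hc x (hzΩ (ball_subset_closedBall hx)))
    (fun x hx => hLu x (hzΩ (ball_subset_closedBall hx))) (huq ▸ hM) (huq ▸ hlt)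
  simp [hqmax.fderiv_eq_zero] at hhopf

end

lemma lap_eq_laplacian {n : ℕ} {u : EuclideanSpace ℝ (Fin n) → ℝ} {x : EuclideanSpace ℝ (Fin n)}
    (hu : ContDiffAt ℝ 2 u x) : lap u x = Δ u x := by
  rw [laplacian_eq_iteratedFDeriv_orthonormalBasis u (EuclideanSpace.basisFun (Fin n) ℝ), lap]
  refine Finset.sum_congr rfl fun i _ => ?_
  simp [iteratedFDeriv_two_apply, fderiv_fderiv_apply hu.differentiableAt_fderiv]

theorem strong_max_principle_c_nonpos_general {n : ℕ} (Ω : Set (EuclideanSpace ℝ (Fin n)))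
    (hΩo : IsOpen Ω) (hΩc : IsConnected Ω)
    (c : EuclideanSpace ℝ (Fin n) → ℝ) (hc_cont : ContinuousOn c Ω)
    (hc : ∀ x ∈ Ω, c x ≤ 0)
    (u : EuclideanSpace ℝ (Fin n) → ℝ) (hu2 : ContDiffOn ℝ 2 u Ω)
    (hLu : ∀ x ∈ Ω, 0 ≤ lap u x + c x * u x)
    (x₀ : EuclideanSpace ℝ (Fin n)) (hx₀ : x₀ ∈ Ω)
    (hmax : ∀ x ∈ Ω, u x ≤ u x₀) (hnn : 0 ≤ u x₀) :
    ∀ x ∈ Ω, u x = u x₀ := by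
  have hΔu : ∀ x ∈ Ω, 0 ≤ Δ u x + c x * u x := fun x hx =>
    lap_eq_laplacian (hu2.contDiffAt (hΩo.mem_nhds hx)) ▸ hLu x hx
  have hU : IsOpen {x ∈ Ω | u x = u x₀} := isOpen_iff_mem_nhds.2 fun x hx =>
    (hΩo.eventually_mem hx.1).and <| eventually_eq_of_laplacian_add_mul_nonneg hΩo hc_cont hc
      hu2 hΔu hnn hmax hx.1 hx.2
  have hV : IsOpen (Ω ∩ u ⁻¹' Iio (u x₀)) := hu2.continuousOn.isOpen_inter_preimage hΩo isOpen_Iio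
  have hsub := hΩc.isPreconnected.subset_left_of_subset_union hU hV
    (disjoint_left.2 fun x hx hx' => (hx.2 ▸ hx'.2 : u x₀ < u x₀).false)
    (fun x hx => (hmax x hx).eq_or_lt.imp (⟨hx, ·⟩) (⟨hx, ·⟩)) ⟨x₀, hx₀, hx₀, rfl⟩
  exact fun x hx => (hsub hx).2

/-- Strong maximum principle for L = Δ + c·I with c ≤ 0: if u satisfies Lu ≥ 0
on a connected bounded open set Ω and attains a nonnegative maximum at an
interior point, then u is constant on Ω. -/
theorem strong_max_principle_c_nonpos {n : ℕ} (Ω : Set (EuclideanSpace ℝ (Fin n)))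
    (hΩo : IsOpen Ω) (hΩc : IsConnected Ω) (hΩb : Bornology.IsBounded Ω)
    (c : EuclideanSpace ℝ (Fin n) → ℝ) (hc_cont : ContinuousOn c Ω)
    (hc : ∀ x ∈ Ω, c x ≤ 0)
    (u : EuclideanSpace ℝ (Fin n) → ℝ) (hu2 : ContDiffOn ℝ 2 u Ω)
    (hLu : ∀ x ∈ Ω, 0 ≤ lap u x + c x * u x)
    (x₀ : EuclideanSpace ℝ (Fin n)) (hx₀ : x₀ ∈ Ω)
    (hmax : ∀ x ∈ Ω, u x ≤ u x₀) (hnn : 0 ≤ u x₀) :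
    ∀ x ∈ Ω, u x = u x₀ :=
  strong_max_principle_c_nonpos_general Ω hΩo hΩc c hc_cont hc u hu2 hLu x₀ hx₀ hmax hnn
end
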